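/- arXiv:1802.09801 — 4 statements merged into one kernel-verified Lean document; each statement's English description precedes it below -/
import Mathlib

section
/- Let G be a graph, L a linear order on V(G), and u,v,w vertices such that v ∈ WReach_i[G,L,u] and w ∈ WReach_j[G,L,u]. Then v ∈ WReach_{i+j}[G,L,w] or w ∈ WReach_{i+j}[G,L,v]. -/
def WReach {V : Type*} (G : SimpleGraph V) (L : V → ℕ) (r : ℕ) (v : V) : Set V :=
  {u | ∃ p : G.Walk v u, p.length ≤ r ∧ ∀ w ∈ p.support, L u ≤ L w}

/-- If `v` is weakly `i`-reachable from `u` and `w` is weakly `j`-reachable from `u`,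
then `v` is weakly `(i+j)`-reachable from `w` or `w` is weakly `(i+j)`-reachable
from `v`. -/
theorem stmt4 {V : Type*} (G : SimpleGraph V) (L : V → ℕ) (hL : Function.Injective L)
    (i j : ℕ) (u v w : V)
    (hv : v ∈ WReach G L i u) (hw : w ∈ WReach G L j u) :
    v ∈ WReach G L (i + j) w ∨ w ∈ WReach G L (i + j) v := by
  obtain ⟨p, hp, hpmin⟩ := hv
  obtain ⟨q, hq, hqmin⟩ := hw
  rcases le_total (L v) (L w) with h | h
  · left
    refine ⟨q.reverse.append p, ?_, ?_⟩
    · simpa using by omega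
    · intro x hx
      rw [SimpleGraph.Walk.mem_support_append_iff, SimpleGraph.Walk.support_reverse,
        List.mem_reverse] at hx
      rcases hx with hx | hx
      · exact h.trans (hqmin x hx)
      · exact hpmin x hx
  · right
    refine ⟨p.reverse.append q, ?_, ?_⟩
    · simpa using by omega
    · intro x hx
      rw [SimpleGraph.Walk.mem_support_append_iff, SimpleGraph.Walk.support_reverse,
        List.mem_reverse] at hx
      rcases hx with hx | hx
      · exact h.trans (hpmin x hx)
      · exact hqmin x hx
end

section
/- For every graph G and r ∈ ℕ, wcol_r(G) ≤ (col_r(G))^r. -/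
def SReach {V : Type*} (G : SimpleGraph V) (L : V → ℕ) (r : ℕ) (v : V) : Set V :=
  {u | u = v ∨ ∃ p : G.Walk v u, p.length ≤ r ∧ L u < L v ∧
    ∀ w ∈ p.support, L w < L v → w = u}

noncomputable def wcol {V : Type*} [Fintype V] (G : SimpleGraph V) (r : ℕ) : ℕ :=
  sInf {c | ∃ L : V → ℕ, Function.Injective L ∧ ∀ v, (WReach G L r v).ncard ≤ c}

noncomputable def scol {V : Type*} [Fintype V] (G : SimpleGraph V) (r : ℕ) : ℕ :=
  sInf {c | ∃ L : V → ℕ, Function.Injective L ∧ ∀ v, (SReach G L r v).ncard ≤ c}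

theorem Set.ncard_biUnion_le_ncard_mul {α ι : Type*} {t : Set ι} (ht : t.Finite)
    (s : ι → Set α) {m : ℕ} (hs : ∀ i ∈ t, (s i).ncard ≤ m) :
    (⋃ i ∈ t, s i).ncard ≤ t.ncard * m := by
  calc (⋃ i ∈ t, s i).ncard ≤ ∑ i ∈ ht.toFinset, (s i).ncard := by
        simpa using ht.toFinset.set_ncard_biUnion_le s
    _ ≤ ht.toFinset.card • m := Finset.sum_le_card_nsmul _ _ _ (by simpa using hs)
    _ = t.ncard * m := by rw [smul_eq_mul, Set.ncard_eq_toFinset_card t ht]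

namespace SimpleGraph.Walk

variable {V : Type*} {G : SimpleGraph V}

theorem exists_eq_append_of_first (P : V → Prop) {v u : V} (p : G.Walk v u) (hu : P u) :
    ∃ (x : V) (q : G.Walk v x) (q' : G.Walk x u),
      p = q.append q' ∧ P x ∧ ∀ w ∈ q.support, P w → w = x := by
  induction p with
  | nil => exact ⟨_, nil, nil, rfl, hu, by simp⟩
  | @cons v _ _ h t ih =>
    by_cases hv : P v
    · exact ⟨v, nil, cons h t, rfl, hv, by simp⟩
    obtain ⟨x, q, q', rfl, hx, hfirst⟩ := ih hu
    refine ⟨x, cons h q, q', rfl, hx, ?_⟩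
    rintro w (_ | ⟨_, hw⟩) hPw
    · exact absurd hPw hv
    · exact hfirst w hw hPw

end SimpleGraph.Walk

section Reach

open SimpleGraph

variable {V : Type*} {G : SimpleGraph V} {L : V → ℕ}

theorem WReach_zero (v : V) : WReach G L 0 v = {v} := by
  ext u
  constructor
  · rintro ⟨p, hp, -⟩
    exact (Walk.eq_of_length_eq_zero (Nat.le_zero.mp hp)).symm
  · rintro rfl
    exact ⟨Walk.nil, le_rfl, by simp⟩

theorem WReach_succ_subset_biUnion (hL : Function.Injective L) {k r : ℕ} (hk : k + 1 ≤ r)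
    (v : V) : WReach G L (k + 1) v ⊆ ⋃ x ∈ SReach G L r v, WReach G L k x := by
  rintro u ⟨p, hp, hmin⟩
  by_cases huv : u = v
  · subst huv
    exact Set.mem_biUnion (Or.inl rfl) ⟨Walk.nil, Nat.zero_le _, by simp⟩
  have hlt : L u < L v :=
    lt_of_le_of_ne (hmin v p.start_mem_support) (hL.ne huv)
  obtain ⟨x, q, q', rfl, hx, hfirst⟩ := p.exists_eq_append_of_first (fun w ↦ L w < L v) hlt
  have hq : 1 ≤ q.length := Nat.one_le_iff_ne_zero.mpr fun h ↦
    (Walk.eq_of_length_eq_zero h ▸ hx).false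
  rw [Walk.length_append] at hp
  refine Set.mem_biUnion (Or.inr ⟨q, by omega, hx, hfirst⟩) ⟨q', by omega, fun w hw ↦ ?_⟩
  exact hmin w ((Walk.mem_support_append_iff q q').mpr (Or.inr hw))

theorem ncard_WReach_le_pow [Finite V] (hL : Function.Injective L) {r s : ℕ}
    (hs : ∀ v, (SReach G L r v).ncard ≤ s) {k : ℕ} (hk : k ≤ r) (v : V) :
    (WReach G L k v).ncard ≤ s ^ k := by
  induction k generalizing v with
  | zero => simp [WReach_zero]
  | succ k ih =>
    calc (WReach G L (k + 1) v).ncard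
        ≤ (⋃ x ∈ SReach G L r v, WReach G L k x).ncard :=
          Set.ncard_le_ncard (WReach_succ_subset_biUnion hL hk v) (Set.toFinite _)
      _ ≤ (SReach G L r v).ncard * s ^ k :=
          Set.ncard_biUnion_le_ncard_mul (Set.toFinite _) _ fun x _ ↦ ih (by omega) x
      _ ≤ s ^ (k + 1) := by
          rw [pow_succ']
          exact Nat.mul_le_mul_right _ (hs v)

theorem exists_injective_ncard_SReach_le_scol [Fintype V] (G : SimpleGraph V) (r : ℕ) :
    ∃ L : V → ℕ, Function.Injective L ∧ ∀ v, (SReach G L r v).ncard ≤ scol G r := by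
  refine Nat.sInf_mem (s := {c | ∃ L : V → ℕ, Function.Injective L ∧
    ∀ v, (SReach G L r v).ncard ≤ c}) ⟨Fintype.card V, fun v ↦ Fintype.equivFin V v, ?_, fun v ↦ ?_⟩
  · exact Fin.val_injective.comp (Fintype.equivFin V).injective
  · simpa [Nat.card_eq_fintype_card] using Set.ncard_le_card (SReach G _ r v)

end Reach

/-- For every graph `G` and radius `r`, `wcol_r(G) ≤ (col_r(G))^r`. -/
theorem stmt7 {V : Type*} [Fintype V] (G : SimpleGraph V) (r : ℕ) :
    wcol G r ≤ (scol G r) ^ r := by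
  obtain ⟨L, hL, hs⟩ := exists_injective_ncard_SReach_le_scol G r
  exact Nat.sInf_le ⟨L, hL, fun v ↦ ncard_WReach_le_pow hL hs le_rfl v⟩
end

section
/- Let G be a graph, L a linear order on V(G), r ∈ ℕ, and suppose every vertex v satisfies |WReach_r[G,L,v]| ≤ c. Let A ⊆ V(G), let v be the L-least vertex of A, let S ⊆ V(G) be disjoint from {v}, and let X = N_r^{G−S}[v] ∩ A (vertices of A within distance r from v in G−S). Then there exists z ∈ WReach_r[G,L,v] such that z ∈ WReach_r[G,L,x] for at least |X|/c of the vertices x ∈ X. -/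
lemma wreach_of_walk {V : Type*} (G : SimpleGraph V) (L : V → ℕ) (r : ℕ) {v x : V}
    (p : G.Walk v x) (hp : p.length ≤ r) :
    ∃ z, z ∈ WReach G L r v ∧ z ∈ WReach G L r x := by
  classical
  obtain ⟨z, hzmem, hzmin⟩ := p.support.toFinset.exists_min_image L
    ⟨v, by simp [SimpleGraph.Walk.start_mem_support]⟩
  rw [List.mem_toFinset] at hzmem
  have hmin : ∀ w ∈ p.support, L z ≤ L w := fun w hw => hzmin w (List.mem_toFinset.mpr hw)
  refine ⟨z, ⟨p.takeUntil z hzmem, ?_, ?_⟩, ⟨(p.dropUntil z hzmem).reverse, ?_, ?_⟩⟩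
  · exact le_trans (p.length_takeUntil_le hzmem) hp
  · exact fun w hw => hmin w (p.support_takeUntil_subset hzmem hw)
  · rw [SimpleGraph.Walk.length_reverse]
    exact le_trans (p.length_dropUntil_le hzmem) hp
  · intro w hw
    rw [SimpleGraph.Walk.support_reverse, List.mem_reverse] at hw
    exact hmin w (p.support_dropUntil_subset hzmem hw)

/-- Let every weakly `r`-reachable set have size at most `c`, let `v` be the `L`-least
vertex of `A`, let `S` avoid `v`, and let `X` be the set of vertices of `A` within
distance at most `r` from `v` in `G - S`. Then some `z ∈ WReach_r[G,L,v]` lies in the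
weakly `r`-reachable sets of at least `|X|/c` of the vertices of `X`. -/
theorem stmt14 {V : Type*} [Fintype V] (G : SimpleGraph V) (L : V → ℕ)
    (hL : Function.Injective L) (r c : ℕ)
    (hc : ∀ v, (WReach G L r v).ncard ≤ c)
    (A : Set V) (v : V) (hv : v ∈ A) (hmin : ∀ a ∈ A, L v ≤ L a)
    (S : Set V) (hvS : v ∉ S)
    (X : Set V)
    (hX : X = {x ∈ A | ∃ p : G.Walk v x, p.length ≤ r ∧ ∀ w ∈ p.support, w ∉ S}) :
    ∃ z ∈ WReach G L r v,
      X.ncard ≤ c * {x ∈ X | z ∈ WReach G L r x}.ncard := by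
  classical
  -- for each x ∈ X choose a common weakly reachable vertex
  have hchoice : ∀ x ∈ X, ∃ z, z ∈ WReach G L r v ∧ z ∈ WReach G L r x := by
    intro x hx
    rw [hX] at hx
    obtain ⟨-, p, hp, -⟩ := hx
    exact wreach_of_walk G L r p hp
  choose! f hf1 hf2 using hchoice
  have hWfin : (WReach G L r v).Finite := Set.toFinite _
  have hXfin : X.Finite := Set.toFinite _
  set Wf : Finset V := hWfin.toFinset with hWf
  set Xf : Finset V := hXfin.toFinset with hXf
  have hWne : Wf.Nonempty := by
    refine ⟨v, ?_⟩
    rw [hWf, Set.Finite.mem_toFinset]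
    exact ⟨SimpleGraph.Walk.nil, by simp, by simp⟩
  obtain ⟨z, hzW, hzmax⟩ := Wf.exists_max_image (fun z => (Xf.filter (fun x => f x = z)).card) hWne
  have hzW' : z ∈ WReach G L r v := (Set.Finite.mem_toFinset _).mp hzW
  refine ⟨z, hzW', ?_⟩
  have hmapsto : ∀ x ∈ Xf, f x ∈ Wf := by
    intro x hx
    rw [Set.Finite.mem_toFinset] at hx ⊢
    exact hf1 x hx
  have hcard : Xf.card = ∑ w ∈ Wf, (Xf.filter (fun x => f x = w)).card :=
    Finset.card_eq_sum_card_fiberwise hmapsto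
  have h1 : Xf.card ≤ Wf.card * (Xf.filter (fun x => f x = z)).card := by
    rw [hcard]
    calc ∑ w ∈ Wf, (Xf.filter (fun x => f x = w)).card
        ≤ ∑ _w ∈ Wf, (Xf.filter (fun x => f x = z)).card :=
          Finset.sum_le_sum fun w hw => hzmax w hw
      _ = Wf.card * (Xf.filter (fun x => f x = z)).card := by
          rw [Finset.sum_const, smul_eq_mul]
  have hWc : Wf.card ≤ c := by
    exact le_trans (le_of_eq (Set.ncard_eq_toFinset_card _ hWfin).symm) (hc v)
  have hfiber : ((Xf.filter (fun x => f x = z)) : Set V) ⊆ {x ∈ X | z ∈ WReach G L r x} := by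
    intro x hx
    simp only [Finset.coe_filter, Set.mem_setOf_eq, hXf, Set.Finite.mem_toFinset] at hx
    obtain ⟨hx1, hx2⟩ := hx
    exact ⟨hx1, hx2 ▸ hf2 x hx1⟩
  have h2 : (Xf.filter (fun x => f x = z)).card ≤ {x ∈ X | z ∈ WReach G L r x}.ncard := by
    rw [← Set.ncard_coe_finset]
    exact Set.ncard_le_ncard hfiber (Set.toFinite _)
  have hXcard : X.ncard = Xf.card := by
    rw [hXf, Set.ncard_eq_toFinset_card]
  calc X.ncard = Xf.card := hXcard
    _ ≤ Wf.card * (Xf.filter (fun x => f x = z)).card := h1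
    _ ≤ c * {x ∈ X | z ∈ WReach G L r x}.ncard :=
        Nat.mul_le_mul hWc h2
end

section
/- Define graphs G(k,r) inductively: G(1,r) is a rooted tree of depth binom(1+r,r) and branching degree d; G(k,1) is the ancestor-descendant closure of a rooted tree of depth binom(k+1,1) and branching degree d; for k,r ≥ 2, G(k,r) is obtained from G(k,r−1) by attaching, to every leaf v of the underlying spanning tree, d copies of G(k−1,r) fully adjacent to v. Then for every vertex v of G(k,r) and every ancestor u of v in the underlying spanning tree T(k,r), there exists a path in G(k,r) from v to u of length at most r using only vertices on the tree-path from v to u in T(k,r). -/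
/-- The depth (number of edges from root to leaves) of the tree `T(k,r)`, a rooted tree
with `binom(k+r,r)` levels of vertices. -/
def treeDepth (k r : ℕ) : ℕ := Nat.choose (k + r) r - 1

/-- The set of pairs of levels `(i,j)`, `i < j`, such that in `G(k,r)` an ancestor at
level `i` is adjacent to each of its descendants at level `j`. This encodes the
recursive construction: `G(1,r)` is a tree (only consecutive levels adjacent); `G(k,1)`
is the ancestor-descendant closure of its tree (all level pairs adjacent); and for
`k,r ≥ 2`, `G(k,r)` consists of `G(k,r-1)`, together with copies of `G(k-1,r)` attached
below the leaves (at level `treeDepth k (r-1)`) of the tree of `G(k,r-1)`, each copy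
fully adjacent to the leaf it is attached to. -/
def Edg : ℕ → ℕ → Set (ℕ × ℕ)
  | 0, _ => ∅
  | _ + 1, 0 => ∅
  | 1, r + 1 => {p | p.2 = p.1 + 1 ∧ p.2 ≤ treeDepth 1 (r + 1)}
  | k + 2, 1 => {p | p.1 < p.2 ∧ p.2 ≤ treeDepth (k + 2) 1}
  | k + 2, r + 2 =>
      Edg (k + 2) (r + 1) ∪
      {p | p.1 = treeDepth (k + 2) (r + 1) ∧
           treeDepth (k + 2) (r + 1) < p.2 ∧ p.2 ≤ treeDepth (k + 2) (r + 2)} ∪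
      (fun q : ℕ × ℕ => (q.1 + treeDepth (k + 2) (r + 1) + 1,
                         q.2 + treeDepth (k + 2) (r + 1) + 1)) '' Edg (k + 1) (r + 2)
  termination_by k r => (k, r)

/-- The graph `G(k,r)` with branching degree `d`: its vertices are the vertices of the
complete `d`-ary rooted tree `T(k,r)` of depth `treeDepth k r` (encoded as lists over
`Fin d`, with the ancestor relation given by the prefix relation), and an
ancestor-descendant pair is adjacent exactly when its pair of levels lies in
`Edg k r`. -/
def lbGraph (d k r : ℕ) : SimpleGraph {l : List (Fin d) // l.length ≤ treeDepth k r} :=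
  SimpleGraph.fromRel fun u v => u.1 <+: v.1 ∧ (u.1.length, v.1.length) ∈ Edg k r

/-!
Adjacency in `G(k,r)` depends only on the levels of an ancestor–descendant pair, so it
suffices to descend from the level of `v` to that of `u` through at most `r` level pairs of
`Edg k r`, and then to follow the corresponding prefixes of `v`. Such a chain of levels is
built along the recursion: in `G(k,r)` with `k, r ≥ 2`, let `D` be the leaf level of
`T(k,r-1)`. Two levels `≤ D` are joined inside `G(k,r-1)` and two levels `> D` inside a copy
of `G(k-1,r)`; from a level `j > D` to a level `i ≤ D` one first jumps to `D` (the leaf is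
adjacent to the whole copy attached below it) and then uses at most `r-1` steps of
`G(k,r-1)`.
-/

/-- A strictly decreasing chain of levels from `j` down to `i` in `n` steps, each step
`(j', j)` lying in `E`. -/
inductive LevelChain (E : Set (ℕ × ℕ)) : ℕ → ℕ → ℕ → Prop
  | refl (j : ℕ) : LevelChain E j j 0
  | cons {i j j' n : ℕ} : j' < j → (j', j) ∈ E → LevelChain E i j' n → LevelChain E i j (n + 1)

namespace LevelChain

variable {E E' : Set (ℕ × ℕ)} {i j n : ℕ}

theorem le (h : LevelChain E i j n) : i ≤ j := by
  induction h with
  | refl => exact le_rfl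
  | cons hlt _ _ ih => omega

theorem mono (hE : E ⊆ E') (h : LevelChain E i j n) : LevelChain E' i j n := by
  induction h with
  | refl => exact .refl _
  | cons hlt hmem _ ih => exact .cons hlt (hE hmem) ih

theorem shift (s : ℕ) (h : LevelChain E i j n) :
    LevelChain ((fun q : ℕ × ℕ => (q.1 + s, q.2 + s)) '' E) (i + s) (j + s) n := by
  induction h with
  | refl => exact .refl _
  | cons hlt hmem _ ih => exact .cons (by omega) ⟨_, hmem, rfl⟩ ih

theorem single (hij : i < j) (hE : (i, j) ∈ E) : LevelChain E i j 1 :=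
  .cons hij hE (.refl i)

theorem of_consecutive (hij : i ≤ j) (hE : ∀ a, i ≤ a → a < j → (a, a + 1) ∈ E) :
    LevelChain E i j (j - i) := by
  induction j, hij using Nat.le_induction with
  | base => simpa using LevelChain.refl (E := E) i
  | succ j hij ih =>
    rw [show j + 1 - i = j - i + 1 by omega]
    exact .cons (by omega) (hE j hij (by omega)) (ih fun a ha haj => hE a ha (by omega))

end LevelChain

theorem treeDepth_one_succ (r : ℕ) : treeDepth 1 (r + 1) = r + 1 := by
  rw [treeDepth, add_comm 1, Nat.choose_succ_self_right]
  omega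

theorem treeDepth_succ_succ (k r : ℕ) :
    treeDepth (k + 2) (r + 2) = treeDepth (k + 2) (r + 1) + 1 + treeDepth (k + 1) (r + 2) := by
  have hpascal := Nat.choose_succ_succ' (k + 2 + (r + 1)) (r + 1)
  have hpos₁ : 0 < Nat.choose (k + 2 + (r + 1)) (r + 1) := Nat.choose_pos (by omega)
  have hpos₂ : 0 < Nat.choose (k + 2 + (r + 1)) (r + 2) := Nat.choose_pos (by omega)
  rw [show r + 1 + 1 = r + 2 from rfl] at hpascal
  simp only [treeDepth]
  rw [show k + 2 + (r + 2) = k + 2 + (r + 1) + 1 by ring,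
    show k + 1 + (r + 2) = k + 2 + (r + 1) by ring, hpascal]
  omega

section Edg

variable {k r : ℕ}

theorem edg_subset_edg_succ : Edg (k + 2) (r + 1) ⊆ Edg (k + 2) (r + 2) := by
  intro p hp
  rw [Edg]
  exact .inl (.inl hp)

theorem mk_treeDepth_mem_edg {j : ℕ} (h₁ : treeDepth (k + 2) (r + 1) < j)
    (h₂ : j ≤ treeDepth (k + 2) (r + 2)) :
    (treeDepth (k + 2) (r + 1), j) ∈ Edg (k + 2) (r + 2) := by
  rw [Edg]
  exact .inl (.inr ⟨rfl, h₁, h₂⟩)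

theorem shift_image_edg_subset :
    (fun q : ℕ × ℕ => (q.1 + (treeDepth (k + 2) (r + 1) + 1),
      q.2 + (treeDepth (k + 2) (r + 1) + 1))) '' Edg (k + 1) (r + 2) ⊆
      Edg (k + 2) (r + 2) := by
  rintro _ ⟨q, hq, rfl⟩
  rw [Edg]
  exact .inr ⟨q, hq, by simp only [add_assoc]⟩

theorem exists_levelChain_edg : ∀ k r : ℕ, 1 ≤ k → 1 ≤ r → ∀ i j : ℕ, i ≤ j →
    j ≤ treeDepth k r → ∃ n ≤ r, LevelChain (Edg k r) i j n
  | 0, _ => by omega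
  | _ + 1, 0 => by omega
  | 1, r + 1 => by
    intro _ _ i j hij hj
    rw [treeDepth_one_succ] at hj
    refine ⟨j - i, by omega, .of_consecutive hij fun a _ haj => ?_⟩
    rw [Edg]
    exact ⟨rfl, by rw [treeDepth_one_succ]; omega⟩
  | k + 2, 1 => by
    intro _ _ i j hij hj
    rcases hij.eq_or_lt with rfl | hlt
    · exact ⟨0, by omega, .refl _⟩
    · refine ⟨1, le_rfl, .single hlt ?_⟩
      rw [Edg]
      exact ⟨hlt, hj⟩
  | k + 2, r + 2 => by
    intro _ _ i j hij hj
    set D := treeDepth (k + 2) (r + 1)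
    have hD := treeDepth_succ_succ k r
    rcases le_or_gt j D with hjD | hjD
    · obtain ⟨n, hn, hc⟩ := exists_levelChain_edg (k + 2) (r + 1) (by omega) (by omega) i j hij hjD
      exact ⟨n, by omega, hc.mono edg_subset_edg_succ⟩
    rcases lt_or_ge D i with hiD | hiD
    · obtain ⟨n, hn, hc⟩ := exists_levelChain_edg (k + 1) (r + 2) (by omega) (by omega)
        (i - (D + 1)) (j - (D + 1)) (by omega) (by omega)
      have hc' := hc.shift (D + 1)
      rw [Nat.sub_add_cancel (by omega), Nat.sub_add_cancel (by omega)] at hc'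
      exact ⟨n, hn, hc'.mono shift_image_edg_subset⟩
    · obtain ⟨n, hn, hc⟩ := exists_levelChain_edg (k + 2) (r + 1) (by omega) (by omega) i D
        (by omega) le_rfl
      exact ⟨n + 1, by omega, .cons (by omega) (mk_treeDepth_mem_edg hjD hj)
        (hc.mono edg_subset_edg_succ)⟩
  termination_by k r => (k, r)

end Edg

def levelGraph (α : Type*) (N : ℕ) (E : Set (ℕ × ℕ)) :
    SimpleGraph {l : List α // l.length ≤ N} :=
  SimpleGraph.fromRel fun u v => u.1 <+: v.1 ∧ (u.1.length, v.1.length) ∈ E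

namespace levelGraph

variable {α : Type*} {N : ℕ} {E : Set (ℕ × ℕ)}

/-- The ancestor of `v` at level `a`; this is `v` itself when `a` exceeds the level of `v`. -/
def ancestor (v : {l : List α // l.length ≤ N}) (a : ℕ) : {l : List α // l.length ≤ N} :=
  ⟨v.1.take a, (List.length_take_le' a v.1).trans v.2⟩

theorem length_ancestor {v : {l : List α // l.length ≤ N}} {a : ℕ} (ha : a ≤ v.1.length) :
    (ancestor v a).1.length = a := by
  simp [ancestor, ha]

theorem adj_ancestor {v : {l : List α // l.length ≤ N}} {a b : ℕ} (hab : a < b)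
    (hb : b ≤ v.1.length) (hE : (a, b) ∈ E) :
    (levelGraph α N E).Adj (ancestor v b) (ancestor v a) := by
  have hlen_a := length_ancestor (v := v) (hab.le.trans hb)
  have hlen_b := length_ancestor (v := v) hb
  refine (SimpleGraph.fromRel_adj _ _ _).mpr ⟨fun h => ?_, .inr ⟨?_, ?_⟩⟩
  · rw [h] at hlen_b
    omega
  · exact List.take_isPrefix_take.mpr (.inl hab.le)
  · rwa [hlen_a, hlen_b]

theorem _root_.LevelChain.exists_walk {v : {l : List α // l.length ≤ N}} {i j n : ℕ}
    (h : LevelChain E i j n) (hj : j ≤ v.1.length) :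
    ∃ p : (levelGraph α N E).Walk (ancestor v j) (ancestor v i), p.length = n ∧
      ∀ w ∈ p.support, ∃ a, i ≤ a ∧ a ≤ j ∧ w = ancestor v a := by
  induction h with
  | refl => exact ⟨.nil, rfl, fun w hw => ⟨i, le_rfl, le_rfl, by simpa using hw⟩⟩
  | @cons j j' n hlt hE hchain ih =>
    obtain ⟨p, hp_len, hp_support⟩ := ih (by omega)
    refine ⟨.cons (adj_ancestor hlt hj hE) p, by simp [hp_len], fun w hw => ?_⟩
    rw [SimpleGraph.Walk.support_cons, List.mem_cons] at hw
    rcases hw with rfl | hw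
    · exact ⟨j, hchain.le.trans hlt.le, le_rfl, rfl⟩
    · obtain ⟨a, hia, haj, rfl⟩ := hp_support w hw
      exact ⟨a, hia, by omega, rfl⟩

theorem exists_walk_of_isPrefix {u v : {l : List α // l.length ≤ N}} (huv : u.1 <+: v.1)
    {n : ℕ} (h : LevelChain E u.1.length v.1.length n) :
    ∃ p : (levelGraph α N E).Walk v u, p.length = n ∧
      ∀ w ∈ p.support, u.1 <+: w.1 ∧ w.1 <+: v.1 := by
  have hv : ancestor v v.1.length = v := Subtype.ext v.1.take_length
  have hu : ancestor v u.1.length = u := Subtype.ext (List.prefix_iff_eq_take.mp huv).symm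
  obtain ⟨p, hp_len, hp_support⟩ := h.exists_walk le_rfl
  refine ⟨p.copy hv hu, by rwa [SimpleGraph.Walk.length_copy], fun w hw => ?_⟩
  rw [SimpleGraph.Walk.support_copy] at hw
  obtain ⟨a, hua, -, rfl⟩ := hp_support w hw
  refine ⟨?_, v.1.take_prefix a⟩
  rw [List.prefix_iff_eq_take.mp huv]
  exact List.take_isPrefix_take.mpr (.inl hua)

end levelGraph

/-- In `G(k,r)`, for every vertex `v` and every ancestor `u` of `v` in the underlying
tree `T(k,r)` (i.e. `u` is a prefix of `v`), there is a path from `v` to `u` of length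
at most `r` using only vertices on the tree-path from `v` to `u` (i.e. prefixes of `v`
extending `u`). -/
theorem stmt18 (d k r : ℕ) (hk : 1 ≤ k) (hr : 1 ≤ r)
    (v u : {l : List (Fin d) // l.length ≤ treeDepth k r}) (hanc : u.1 <+: v.1) :
    ∃ p : (lbGraph d k r).Walk v u, p.length ≤ r ∧
      ∀ w ∈ p.support, u.1 <+: w.1 ∧ w.1 <+: v.1 := by
  obtain ⟨n, hn, hchain⟩ :=
    exists_levelChain_edg k r hk hr u.1.length v.1.length hanc.length_le v.2
  obtain ⟨p, hp_len, hp_support⟩ := levelGraph.exists_walk_of_isPrefix hanc hchain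
  exact ⟨p, hp_len ▸ hn, hp_support⟩
end
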